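/- arXiv:2510.12077 — 4 statements merged into one kernel-verified Lean document; each statement's English description precedes it below -/
import Mathlib

section
/- Let X be a finite set with at least two elements and let 0 < m ≤ 1/|X|. For all probability distributions q and p on X belonging to the restricted simplex Δ̊_m(X), the Kullback–Leibler divergence satisfies (1/2)·‖p − q‖₂² ≤ D(q‖p) ≤ (1/(2m))·‖p − q‖₂², where ‖p − q‖₂² = Σ_{x∈X} (p(x) − q(x))². In particular, there exist constants c, c' > 0 (depending only on m) such that c‖p − q‖₂² ≤ D(q‖p) ≤ c'‖p − q‖₂² for all such p, q. -/
/-!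
With `klFun t = t log t + 1 - t`, each summand of `D(q‖p)`, after adding `∑ p - ∑ q = 0`,
becomes `p klFun (q / p)`. Comparing the derivative `log t` of `klFun` with those of
`(t - 1)² / 2` and of `(t - 1)² / (2t)`, both comparisons reducing to `log s ≤ s - 1`, gives
`(t - 1)² / (2 max 1 t) ≤ klFun t ≤ (t - 1)² / (2 min 1 t)`. Scaled by `p`, this reads
`(q - p)² / (2 max q p) ≤ p klFun (q / p) ≤ (q - p)² / (2 min q p)`, and `m ≤ p, q ≤ 1`
finishes.
-/

open Finset

/-- A probability distribution on a finite type: nonnegative and sums to 1. -/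
def IsProb {X : Type*} [Fintype X] (p : X → ℝ) : Prop :=
  (∀ x, 0 ≤ p x) ∧ ∑ x, p x = 1

/-- Kullback–Leibler divergence between distributions on a finite type. -/
noncomputable def klDiv {X : Type*} [Fintype X] (q p : X → ℝ) : ℝ :=
  ∑ x, q x * Real.log (q x / p x)

open Real Set
open InformationTheory (klFun klFun_apply klFun_one hasDerivAt_klFun)

lemma monotoneOn_Ioi_of_hasDerivAt_nonneg {f f' : ℝ → ℝ} {a : ℝ}
    (hf : ∀ x ∈ Ioi a, HasDerivAt f (f' x) x) (hf' : ∀ x ∈ Ioi a, 0 ≤ f' x) :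
    MonotoneOn f (Ioi a) :=
  monotoneOn_of_hasDerivWithinAt_nonneg (convex_Ioi a)
    (fun x hx ↦ (hf x hx).continuousAt.continuousWithinAt)
    (fun x hx ↦ (hf x (interior_subset hx)).hasDerivWithinAt)
    (fun x hx ↦ hf' x (interior_subset hx))

lemma monotoneOn_sq_sub_one_div_two_sub_klFun :
    MonotoneOn (fun t ↦ (t - 1) ^ 2 / 2 - klFun t) (Ioi 0) := by
  refine monotoneOn_Ioi_of_hasDerivAt_nonneg (f' := fun t ↦ (t - 1) - log t) (fun t ht ↦ ?_)
    (fun t ht ↦ sub_nonneg.2 (log_le_sub_one_of_pos ht))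
  refine (((((hasDerivAt_id t).sub_const 1).pow 2).div_const 2).sub
    (hasDerivAt_klFun (ne_of_gt ht))).congr_deriv ?_
  simp

lemma monotoneOn_klFun_sub_half_add_inv :
    MonotoneOn (fun t ↦ klFun t - ((t + t⁻¹) / 2 - 1)) (Ioi 0) := by
  refine monotoneOn_Ioi_of_hasDerivAt_nonneg (f' := fun t ↦ log t - (1 - (t ^ 2)⁻¹) / 2)
    (fun t ht ↦ ?_) (fun t ht ↦ ?_)
  · refine ((hasDerivAt_klFun (ne_of_gt ht)).sub ((((hasDerivAt_id t).add
      (hasDerivAt_inv (ne_of_gt ht))).div_const 2).sub_const 1)).congr_deriv ?_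
    ring
  · have h := one_sub_inv_le_log_of_pos (pow_pos (mem_Ioi.1 ht) 2)
    rw [log_pow, Nat.cast_ofNat] at h
    linarith

lemma half_add_inv_sub_one_eq {t : ℝ} (ht : 0 < t) :
    (t + t⁻¹) / 2 - 1 = (t - 1) ^ 2 / (2 * t) := by
  field_simp
  ring

lemma sq_sub_one_div_two_max_le_klFun {t : ℝ} (ht : 0 < t) :
    (t - 1) ^ 2 / (2 * max 1 t) ≤ klFun t := by
  rcases le_total t 1 with ht1 | ht1
  · have := monotoneOn_sq_sub_one_div_two_sub_klFun ht (mem_Ioi.2 one_pos) ht1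
    simp only [klFun_one] at this
    rw [max_eq_left ht1]
    linarith
  · have := monotoneOn_klFun_sub_half_add_inv (mem_Ioi.2 one_pos) ht ht1
    norm_num [klFun_one, half_add_inv_sub_one_eq ht] at this
    rw [max_eq_right ht1]
    linarith

lemma klFun_le_sq_sub_one_div_two_min {t : ℝ} (ht : 0 < t) :
    klFun t ≤ (t - 1) ^ 2 / (2 * min 1 t) := by
  rcases le_total t 1 with ht1 | ht1
  · have := monotoneOn_klFun_sub_half_add_inv ht (mem_Ioi.2 one_pos) ht1
    norm_num [klFun_one, half_add_inv_sub_one_eq ht] at this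
    rw [min_eq_right ht1]
    linarith
  · have := monotoneOn_sq_sub_one_div_two_sub_klFun (mem_Ioi.2 one_pos) ht ht1
    simp only [klFun_one] at this
    rw [min_eq_left ht1]
    linarith

lemma sq_sub_div_two_mul_eq {a b c : ℝ} (hb : 0 < b) :
    (a - b) ^ 2 / (2 * (b * c)) = b * ((a / b - 1) ^ 2 / (2 * c)) := by
  field_simp

lemma sq_sub_div_two_max_le_mul_klFun_div {a b : ℝ} (ha : 0 < a) (hb : 0 < b) :
    (a - b) ^ 2 / (2 * max a b) ≤ b * klFun (a / b) := by
  have h := sq_sub_div_two_mul_eq (a := a) (c := max 1 (a / b)) hb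
  rw [mul_max_of_nonneg _ _ hb.le, mul_one, mul_div_cancel₀ _ hb.ne', max_comm] at h
  rw [h]
  exact mul_le_mul_of_nonneg_left (sq_sub_one_div_two_max_le_klFun (div_pos ha hb)) hb.le

lemma mul_klFun_div_le_sq_sub_div_two_min {a b : ℝ} (ha : 0 < a) (hb : 0 < b) :
    b * klFun (a / b) ≤ (a - b) ^ 2 / (2 * min a b) := by
  have h := sq_sub_div_two_mul_eq (a := a) (c := min 1 (a / b)) hb
  rw [mul_min_of_nonneg _ _ hb.le, mul_one, mul_div_cancel₀ _ hb.ne', min_comm] at h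
  rw [h]
  exact mul_le_mul_of_nonneg_left (klFun_le_sq_sub_one_div_two_min (div_pos ha hb)) hb.le

lemma IsProb.le_one {X : Type*} [Fintype X] {p : X → ℝ} (hp : IsProb p) (x : X) : p x ≤ 1 :=
  hp.2 ▸ single_le_sum (fun i _ ↦ hp.1 i) (mem_univ x)

lemma klDiv_eq_sum_mul_klFun {X : Type*} [Fintype X] {q p : X → ℝ}
    (hsum : ∑ x, q x = ∑ x, p x) (hp : ∀ x, 0 < p x) :
    klDiv q p = ∑ x, p x * klFun (q x / p x) := by
  have h x : p x * klFun (q x / p x) = q x * log (q x / p x) + (p x - q x) := by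
    have := (hp x).ne'
    rw [klFun_apply]
    field_simp
    ring
  rw [sum_congr rfl fun x _ ↦ h x, sum_add_distrib, sum_sub_distrib, hsum, sub_self, add_zero,
    klDiv]

lemma half_mul_sum_sq_le_klDiv {X : Type*} [Fintype X] {q p : X → ℝ} (hq : IsProb q)
    (hp : IsProb p) (hq0 : ∀ x, 0 < q x) (hp0 : ∀ x, 0 < p x) :
    1 / 2 * ∑ x, (p x - q x) ^ 2 ≤ klDiv q p := by
  rw [klDiv_eq_sum_mul_klFun (hq.2.trans hp.2.symm) hp0, mul_sum]
  refine sum_le_sum fun x _ ↦ ?_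
  calc 1 / 2 * (p x - q x) ^ 2 = (q x - p x) ^ 2 / (2 * 1) := by ring
    _ ≤ (q x - p x) ^ 2 / (2 * max (q x) (p x)) := by
      gcongr
      · exact mul_pos two_pos (lt_max_of_lt_left (hq0 x))
      · exact max_le (hq.le_one x) (hp.le_one x)
    _ ≤ p x * klFun (q x / p x) := sq_sub_div_two_max_le_mul_klFun_div (hq0 x) (hp0 x)

lemma klDiv_le_mul_sum_sq {X : Type*} [Fintype X] {q p : X → ℝ} {m : ℝ}
    (hsum : ∑ x, q x = ∑ x, p x) (hm : 0 < m) (hqm : ∀ x, m ≤ q x) (hpm : ∀ x, m ≤ p x) :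
    klDiv q p ≤ 1 / (2 * m) * ∑ x, (p x - q x) ^ 2 := by
  have hq0 x : 0 < q x := hm.trans_le (hqm x)
  have hp0 x : 0 < p x := hm.trans_le (hpm x)
  rw [klDiv_eq_sum_mul_klFun hsum hp0, mul_sum]
  refine sum_le_sum fun x _ ↦ ?_
  calc p x * klFun (q x / p x) ≤ (q x - p x) ^ 2 / (2 * min (q x) (p x)) :=
        mul_klFun_div_le_sq_sub_div_two_min (hq0 x) (hp0 x)
    _ ≤ (q x - p x) ^ 2 / (2 * m) := by gcongr; exact le_min (hqm x) (hpm x)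
    _ = 1 / (2 * m) * (p x - q x) ^ 2 := by ring

theorem stmt0_general {X : Type*} [Fintype X]
    (m : ℝ) (hm : 0 < m) :
    (∀ q p : X → ℝ, IsProb q → IsProb p → (∀ x, m ≤ q x) → (∀ x, m ≤ p x) →
      (1 / 2) * (∑ x, (p x - q x) ^ 2) ≤ klDiv q p ∧
      klDiv q p ≤ (1 / (2 * m)) * (∑ x, (p x - q x) ^ 2)) ∧
    (∃ c c' : ℝ, 0 < c ∧ 0 < c' ∧
      ∀ q p : X → ℝ, IsProb q → IsProb p → (∀ x, m ≤ q x) → (∀ x, m ≤ p x) →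
        c * (∑ x, (p x - q x) ^ 2) ≤ klDiv q p ∧
        klDiv q p ≤ c' * (∑ x, (p x - q x) ^ 2)) := by
  have bounds : ∀ q p : X → ℝ, IsProb q → IsProb p → (∀ x, m ≤ q x) → (∀ x, m ≤ p x) →
      1 / 2 * ∑ x, (p x - q x) ^ 2 ≤ klDiv q p ∧
      klDiv q p ≤ 1 / (2 * m) * ∑ x, (p x - q x) ^ 2 := fun q p hq hp hqm hpm ↦
    ⟨half_mul_sum_sq_le_klDiv hq hp (fun x ↦ hm.trans_le (hqm x))
      (fun x ↦ hm.trans_le (hpm x)), klDiv_le_mul_sum_sq (hq.2.trans hp.2.symm) hm hqm hpm⟩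
  exact ⟨bounds, 1 / 2, 1 / (2 * m), one_half_pos, by positivity, bounds⟩

/-- for distributions in the restricted simplex `Δ̊_m(X)`,
`(1/2)‖p − q‖₂² ≤ D(q‖p) ≤ (1/(2m))‖p − q‖₂²`, and in particular there are
constants `c, c' > 0` with `c‖p − q‖₂² ≤ D(q‖p) ≤ c'‖p − q‖₂²`. -/
theorem stmt0 {X : Type*} [Fintype X] (hX : 2 ≤ Fintype.card X)
    (m : ℝ) (hm : 0 < m) (hm' : m ≤ 1 / (Fintype.card X : ℝ)) :
    (∀ q p : X → ℝ, IsProb q → IsProb p → (∀ x, m ≤ q x) → (∀ x, m ≤ p x) →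
      (1 / 2) * (∑ x, (p x - q x) ^ 2) ≤ klDiv q p ∧
      klDiv q p ≤ (1 / (2 * m)) * (∑ x, (p x - q x) ^ 2)) ∧
    (∃ c c' : ℝ, 0 < c ∧ 0 < c' ∧
      ∀ q p : X → ℝ, IsProb q → IsProb p → (∀ x, m ≤ q x) → (∀ x, m ≤ p x) →
        c * (∑ x, (p x - q x) ^ 2) ≤ klDiv q p ∧
        klDiv q p ≤ c' * (∑ x, (p x - q x) ^ 2)) :=
  stmt0_general m hm
end

section
/- Let X be a finite set and let q, p be probability distributions on X with q(x) > 0 and p(x) > 0 for all x ∈ X. Then (1/2)·Σ_{x∈X} (q(x) − p(x))²/max(q(x), p(x)) ≤ D(q‖p) ≤ (1/2)·Σ_{x∈X} (q(x) − p(x))²/min(q(x), p(x)). -/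
open Finset

/-!
Since `∑ q = ∑ p = 1`, the divergence is the sum of the nonnegative terms
`φ(a, b) = a log (a / b) - a + b` with `a = q x`, `b = p x`, and both bounds hold term by term.
Comparing `φ(a, b)` with `(a - b)² / (2b)` is the inequality `t ≤ sinh t` at `t = log (a / b)`;
comparing it with `(a - b)² / (2a)` is the sign of `log y - ((y - 1) - (y - 1)² / 2)` at `y = b / a`,
a function that increases because its derivative is `(y - 1)² / y`.
-/

namespace Real

lemma monotoneOn_log_sub_quadratic :
    MonotoneOn (fun y => log y - ((y - 1) - (y - 1) ^ 2 / 2)) (Set.Ioi 0) := by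
  have hderiv : ∀ y ∈ Set.Ioi (0 : ℝ),
      HasDerivAt (fun y => log y - ((y - 1) - (y - 1) ^ 2 / 2)) ((y - 1) ^ 2 / y) y := by
    intro y hy
    have hy₀ : y ≠ 0 := ne_of_gt hy
    have h := (hasDerivAt_log hy₀).sub
      (((hasDerivAt_id y).sub_const 1).sub ((((hasDerivAt_id y).sub_const 1).pow 2).div_const 2))
    refine h.congr_deriv ?_
    simp only [id]
    field_simp
    ring
  apply monotoneOn_of_hasDerivWithinAt_nonneg (convex_Ioi 0)
    (fun y hy => (hderiv y hy).continuousAt.continuousWithinAt)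
  · rw [interior_Ioi]
    exact fun y hy => (hderiv y hy).hasDerivWithinAt
  · rw [interior_Ioi]
    exact fun y hy => div_nonneg (sq_nonneg _) (le_of_lt hy)

lemma sub_sub_sq_half_le_log {y : ℝ} (hy : 1 ≤ y) : (y - 1) - (y - 1) ^ 2 / 2 ≤ log y := by
  have h := monotoneOn_log_sub_quadratic (Set.mem_Ioi.2 one_pos) (Set.mem_Ioi.2 (by linarith)) hy
  norm_num at h
  linarith

lemma log_le_sub_sub_sq_half {y : ℝ} (hy₀ : 0 < y) (hy : y ≤ 1) :
    log y ≤ (y - 1) - (y - 1) ^ 2 / 2 := by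
  have h := monotoneOn_log_sub_quadratic hy₀ (Set.mem_Ioi.2 one_pos) hy
  norm_num at h
  linarith

end Real

open Real

section KLTerm

variable {a b : ℝ}

lemma mul_log_div_sub_add_sub_sq_div_right (ha : 0 < a) (hb : 0 < b) :
    a * log (a / b) - a + b - (a - b) ^ 2 / b / 2 = a * (log (a / b) - sinh (log (a / b))) := by
  rw [sinh_log (div_pos ha hb)]
  field_simp
  ring

lemma mul_log_div_sub_add_sub_sq_div_left (ha : 0 < a) :
    a * log (a / b) - a + b - (a - b) ^ 2 / a / 2 =
      -a * (log (b / a) - ((b / a - 1) - (b / a - 1) ^ 2 / 2)) := by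
  rw [← inv_div b a, log_inv]
  field_simp
  ring

lemma sq_div_max_le_mul_log_div_sub_add (ha : 0 < a) (hb : 0 < b) :
    (a - b) ^ 2 / max a b / 2 ≤ a * log (a / b) - a + b := by
  rcases le_total b a with hba | hab
  · have hlog := log_le_sub_sub_sq_half (div_pos hb ha) ((div_le_one ha).2 hba)
    rw [max_eq_left hba, ← sub_nonneg, mul_log_div_sub_add_sub_sq_div_left ha]
    exact mul_nonneg_of_nonpos_of_nonpos (neg_nonpos.2 ha.le) (sub_nonpos.2 hlog)
  · have hlog := sinh_le_self_iff.2 (log_nonpos (div_pos ha hb).le ((div_le_one hb).2 hab))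
    rw [max_eq_right hab, ← sub_nonneg, mul_log_div_sub_add_sub_sq_div_right ha hb]
    exact mul_nonneg ha.le (sub_nonneg.2 hlog)

lemma mul_log_div_sub_add_le_sq_div_min (ha : 0 < a) (hb : 0 < b) :
    a * log (a / b) - a + b ≤ (a - b) ^ 2 / min a b / 2 := by
  rcases le_total b a with hba | hab
  · have hlog := self_le_sinh_iff.2 (log_nonneg ((one_le_div hb).2 hba))
    rw [min_eq_right hba, ← sub_nonpos, mul_log_div_sub_add_sub_sq_div_right ha hb]
    exact mul_nonpos_of_nonneg_of_nonpos ha.le (sub_nonpos.2 hlog)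
  · have hlog := sub_sub_sq_half_le_log ((one_le_div ha).2 hab)
    rw [min_eq_left hab, ← sub_nonpos, mul_log_div_sub_add_sub_sq_div_left ha]
    exact mul_nonpos_of_nonpos_of_nonneg (neg_nonpos.2 ha.le) (sub_nonneg.2 hlog)

end KLTerm

lemma klDiv_eq_sum_mul_log_div_sub_add {X : Type*} [Fintype X] {q p : X → ℝ}
    (hq : ∑ x, q x = 1) (hp : ∑ x, p x = 1) :
    klDiv q p = ∑ x, (q x * log (q x / p x) - q x + p x) := by
  rw [klDiv, sum_add_distrib, sum_sub_distrib, hq, hp]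
  ring

/-- chi-square-like bounds for the KL divergence:
`(1/2)·Σ (q−p)²/max(q,p) ≤ D(q‖p) ≤ (1/2)·Σ (q−p)²/min(q,p)`. -/
theorem stmt1 {X : Type*} [Fintype X] (q p : X → ℝ)
    (hq : IsProb q) (hp : IsProb p)
    (hqpos : ∀ x, 0 < q x) (hppos : ∀ x, 0 < p x) :
    (1 / 2) * (∑ x, (q x - p x) ^ 2 / max (q x) (p x)) ≤ klDiv q p ∧
    klDiv q p ≤ (1 / 2) * (∑ x, (q x - p x) ^ 2 / min (q x) (p x)) := by
  rw [klDiv_eq_sum_mul_log_div_sub_add hq.2 hp.2, mul_sum, mul_sum]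
  constructor
  · refine sum_le_sum fun x _ => ?_
    linarith [sq_div_max_le_mul_log_div_sub_add (hqpos x) (hppos x)]
  · refine sum_le_sum fun x _ => ?_
    linarith [mul_log_div_sub_add_le_sq_div_min (hqpos x) (hppos x)]
end

section
/- Let X be a finite set and let q, p be probability distributions on X with q(x) > 0 and p(x) > 0 for all x ∈ X. Let ℓ(x) = log(q(x)/p(x)), M = max_{x∈X} ℓ(x) and m̃ = min_{x∈X} ℓ(x). Then, with c = 2/max(1, e^{−m̃}) and c' = 2/min(1, e^{−M}), one has c·D(q‖p) ≤ Σ_{x∈X} q(x)·ℓ(x)² ≤ c'·D(q‖p). -/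
/-!
Writing `ℓ = log (q / p)`, the identity `∑ p = ∑ q = 1` gives
`D(q‖p) = ∑ q (ℓ + e^{-ℓ} - 1)`. By Taylor's theorem with Lagrange remainder,
`e^s - 1 - s = e^ξ s² / 2` for some `ξ` between `0` and `s`, so with `s = -ℓ` each summand
`ℓ + e^{-ℓ} - 1` lies between `ℓ² / 2 · min 1 e^{-M}` and `ℓ² / 2 · max 1 e^{-m̃}`.
-/

open Finset

open Real Set

theorem exists_mem_uIoo_exp_sub_one_sub_eq {s : ℝ} (hs : s ≠ 0) :
    ∃ ξ ∈ uIoo 0 s, exp s - 1 - s = exp ξ * s ^ 2 / 2 := by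
  obtain ⟨ξ, hξ, h⟩ := taylor_mean_remainder_lagrange_iteratedDeriv (f := exp) (n := 1) hs.symm
    contDiff_exp.contDiffOn
  have hderiv : derivWithin exp (uIcc 0 s) 0 = 1 := by
    rw [(hasDerivAt_exp 0).hasDerivWithinAt.derivWithin
      (uniqueDiffOn_uIcc hs.symm 0 left_mem_uIcc), exp_zero]
  refine ⟨ξ, hξ, ?_⟩
  rw [taylorWithinEval_succ, taylor_within_zero_eval, iteratedDerivWithin_one, hderiv,
    iteratedDeriv_eq_iterate, iter_deriv_exp] at h
  rw [sub_sub]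
  simpa using h

theorem exp_sub_one_sub_le_of_le {s b : ℝ} (hsb : s ≤ b) :
    exp s - 1 - s ≤ s ^ 2 / 2 * max 1 (exp b) := by
  rcases eq_or_ne s 0 with rfl | hs
  · simp
  obtain ⟨ξ, hξ, h⟩ := exists_mem_uIoo_exp_sub_one_sub_eq hs
  have hξb : exp ξ ≤ max 1 (exp b) := by
    rw [← exp_zero, ← Monotone.map_max exp_monotone]
    exact exp_le_exp.2 (hξ.2.le.trans (max_le_max le_rfl hsb))
  rw [h, mul_div_assoc, mul_comm]
  gcongr

theorem le_exp_sub_one_sub_of_le {a s : ℝ} (has : a ≤ s) :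
    s ^ 2 / 2 * min 1 (exp a) ≤ exp s - 1 - s := by
  rcases eq_or_ne s 0 with rfl | hs
  · simp
  obtain ⟨ξ, hξ, h⟩ := exists_mem_uIoo_exp_sub_one_sub_eq hs
  have haξ : min 1 (exp a) ≤ exp ξ := by
    rw [← exp_zero, ← Monotone.map_min exp_monotone]
    exact exp_le_exp.2 ((min_le_min le_rfl has).trans hξ.1.le)
  rw [h, mul_div_assoc, mul_comm (exp ξ)]
  gcongr

theorem two_div_max_one_exp_neg_mul_le {m t : ℝ} (hmt : m ≤ t) :
    2 / max 1 (exp (-m)) * (t + exp (-t) - 1) ≤ t ^ 2 := by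
  have h := exp_sub_one_sub_le_of_le (neg_le_neg hmt)
  rw [neg_sq] at h
  rw [div_mul_eq_mul_div, div_le_iff₀ (lt_max_of_lt_left one_pos)]
  linarith

theorem le_two_div_min_one_exp_neg_mul {t M : ℝ} (htM : t ≤ M) :
    t ^ 2 ≤ 2 / min 1 (exp (-M)) * (t + exp (-t) - 1) := by
  have h := le_exp_sub_one_sub_of_le (neg_le_neg htM)
  rw [neg_sq] at h
  rw [div_mul_eq_mul_div, le_div_iff₀ (lt_min one_pos (exp_pos _))]
  linarith

theorem klDiv_eq_sum_mul_log_add_exp_neg_log_sub_one {X : Type*} [Fintype X] {q p : X → ℝ}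
    (hq : ∑ x, q x = 1) (hp : ∑ x, p x = 1) (hqpos : ∀ x, 0 < q x) (hppos : ∀ x, 0 < p x) :
    klDiv q p = ∑ x, q x * (log (q x / p x) + exp (-log (q x / p x)) - 1) := by
  have hterm (x : X) : q x * (log (q x / p x) + exp (-log (q x / p x)) - 1)
      = q x * log (q x / p x) + (p x - q x) := by
    rw [exp_neg, exp_log (div_pos (hqpos x) (hppos x)), inv_div]
    field_simp [(hqpos x).ne']
    ring
  simp only [hterm, sum_add_distrib, sum_sub_distrib, hp, hq, sub_self, add_zero, klDiv]

/-- with `ℓ(x) = log(q(x)/p(x))`, `M = max_x ℓ(x)`, `m̃ = min_x ℓ(x)`,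
`c = 2/max(1, e^{−m̃})` and `c' = 2/min(1, e^{−M})`, one has
`c·D(q‖p) ≤ Σ_x q(x)·ℓ(x)² ≤ c'·D(q‖p)`. -/
theorem stmt7 {X : Type*} [Fintype X] [Nonempty X] (q p : X → ℝ)
    (hq : IsProb q) (hp : IsProb p)
    (hqpos : ∀ x, 0 < q x) (hppos : ∀ x, 0 < p x) :
    (2 / max 1 (Real.exp (-(Finset.univ.inf' Finset.univ_nonempty
          (fun x => Real.log (q x / p x)))))) * klDiv q p
      ≤ ∑ x, q x * (Real.log (q x / p x)) ^ 2 ∧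
    ∑ x, q x * (Real.log (q x / p x)) ^ 2
      ≤ (2 / min 1 (Real.exp (-(Finset.univ.sup' Finset.univ_nonempty
          (fun x => Real.log (q x / p x)))))) * klDiv q p := by
  rw [klDiv_eq_sum_mul_log_add_exp_neg_log_sub_one hq.2 hp.2 hqpos hppos, mul_sum, mul_sum]
  constructor
  · refine sum_le_sum fun x _ => ?_
    rw [mul_left_comm]
    exact mul_le_mul_of_nonneg_left
      (two_div_max_one_exp_neg_mul_le (inf'_le (fun y => log (q y / p y)) (mem_univ x))) (hqpos x).le
  · refine sum_le_sum fun x _ => ?_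
    rw [mul_left_comm]
    exact mul_le_mul_of_nonneg_left
      (le_two_div_min_one_exp_neg_mul (le_sup' (fun y => log (q y / p y)) (mem_univ x))) (hqpos x).le
end

section
/- Let X be a finite set and let q, p be probability distributions on X with q(x) > 0 and p(x) > 0 for all x ∈ X. Let ℓ(x) = log(q(x)/p(x)), M = max_{x∈X} ℓ(x) and m̃ = min_{x∈X} ℓ(x). Then, with c = 2/max(1, e^{−m̃}) and c' = 2/min(1, e^{−M}), the variance Var_q(ℓ) := Σ_{x∈X} q(x)·ℓ(x)² − D(q‖p)² satisfies (c − D(q‖p))·D(q‖p) ≤ Var_q(ℓ) ≤ (c' − D(q‖p))·D(q‖p). -/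
open Finset

/-!
With `u = log (p x / q x) = -ℓ x`, the summands `q x * (exp u - 1 - u) = p x - q x + q x * ℓ x`
add up to `D(q‖p)`, while `q x * u ^ 2 = q x * ℓ x ^ 2`. Taylor's theorem gives
`exp u - 1 - u = exp ξ * u ^ 2 / 2` for some `ξ` between `0` and `u`, and `exp ξ` lies between
`min 1 (exp (-M))` and `max 1 (exp (-m̃))`. Comparing the two sums term by term gives
`c * D ≤ ∑ q ℓ² ≤ c' * D`, which is the claim after subtracting `D²`.
-/

open Real Set

theorem exists_mem_uIcc_exp_sub_one_sub_eq (u : ℝ) :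
    ∃ ξ ∈ uIcc 0 u, exp u - 1 - u = exp ξ * u ^ 2 / 2 := by
  rcases eq_or_ne u 0 with rfl | hu
  · exact ⟨0, left_mem_uIcc, by simp⟩
  obtain ⟨ξ, hξ, h⟩ := taylor_mean_remainder_lagrange_iteratedDeriv (n := 1) hu.symm
    contDiff_exp.contDiffOn
  have h0 : derivWithin exp (uIcc 0 u) 0 = 1 := by
    rw [(hasDerivAt_exp 0).hasDerivWithinAt.derivWithin
      (uniqueDiffOn_uIcc hu.symm 0 left_mem_uIcc), exp_zero]
  simp only [taylorWithinEval_succ, taylor_within_zero_eval, iteratedDeriv_eq_iterate,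
    iter_deriv_exp] at h
  norm_num [h0] at h
  exact ⟨ξ, uIoo_subset_uIcc_self hξ, by linarith⟩

theorem min_one_exp_mul_sq_div_two_le {a u : ℝ} (hau : a ≤ u) :
    min 1 (exp a) * u ^ 2 / 2 ≤ exp u - 1 - u := by
  obtain ⟨ξ, hξ, h⟩ := exists_mem_uIcc_exp_sub_one_sub_eq u
  have : min 1 (exp a) ≤ exp ξ := by
    rcases le_total 0 u with hu | hu
    · rw [uIcc_of_le hu] at hξ
      exact min_le_of_left_le (one_le_exp hξ.1)
    · rw [uIcc_of_ge hu] at hξ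
      exact min_le_of_right_le (exp_le_exp.2 (hau.trans hξ.1))
  rw [h]
  gcongr

theorem exp_sub_one_sub_le_max_one_exp_mul_sq_div_two {u b : ℝ} (hub : u ≤ b) :
    exp u - 1 - u ≤ max 1 (exp b) * u ^ 2 / 2 := by
  obtain ⟨ξ, hξ, h⟩ := exists_mem_uIcc_exp_sub_one_sub_eq u
  have : exp ξ ≤ max 1 (exp b) := by
    rcases le_total 0 u with hu | hu
    · rw [uIcc_of_le hu] at hξ
      exact le_max_of_le_right (exp_le_exp.2 (hξ.2.trans hub))
    · rw [uIcc_of_ge hu] at hξ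
      exact le_max_of_le_left (exp_le_one_iff.2 hξ.2)
  rw [h]
  gcongr

theorem two_div_max_one_exp_mul_exp_sub_one_sub_le_sq {u b : ℝ} (hub : u ≤ b) :
    2 / max 1 (exp b) * (exp u - 1 - u) ≤ u ^ 2 := by
  have hK : 0 < max 1 (exp b) := lt_max_of_lt_left one_pos
  rw [div_mul_eq_mul_div, div_le_iff₀ hK]
  linarith [exp_sub_one_sub_le_max_one_exp_mul_sq_div_two hub]

theorem sq_le_two_div_min_one_exp_mul_exp_sub_one_sub {a u : ℝ} (hau : a ≤ u) :
    u ^ 2 ≤ 2 / min 1 (exp a) * (exp u - 1 - u) := by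
  have hk : 0 < min 1 (exp a) := lt_min one_pos (exp_pos a)
  rw [div_mul_eq_mul_div, le_div_iff₀ hk]
  linarith [min_one_exp_mul_sq_div_two_le hau]

theorem klDiv_eq_sum_mul_exp_sub_one_sub {X : Type*} [Fintype X] {q p : X → ℝ}
    (hq : ∑ x, q x = 1) (hp : ∑ x, p x = 1) (hqpos : ∀ x, 0 < q x) (hppos : ∀ x, 0 < p x) :
    klDiv q p = ∑ x, q x * (exp (-log (q x / p x)) - 1 - -log (q x / p x)) := by
  have hterm : ∀ x, q x * (exp (-log (q x / p x)) - 1 - -log (q x / p x))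
      = p x - q x + q x * log (q x / p x) := by
    intro x
    rw [exp_neg, exp_log (div_pos (hqpos x) (hppos x))]
    field_simp [(hqpos x).ne', (hppos x).ne']
    ring
  simp only [hterm, sum_add_distrib, sum_sub_distrib, hp, hq, klDiv]
  ring

/-- with `ℓ(x) = log(q(x)/p(x))`, `M = max_x ℓ(x)`, `m̃ = min_x ℓ(x)`,
`c = 2/max(1, e^{−m̃})` and `c' = 2/min(1, e^{−M})`, the variance
`Var_q(ℓ) = Σ_x q(x)·ℓ(x)² − D(q‖p)²` satisfies
`(c − D(q‖p))·D(q‖p) ≤ Var_q(ℓ) ≤ (c' − D(q‖p))·D(q‖p)`. -/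
theorem stmt8 {X : Type*} [Fintype X] [Nonempty X] (q p : X → ℝ)
    (hq : IsProb q) (hp : IsProb p)
    (hqpos : ∀ x, 0 < q x) (hppos : ∀ x, 0 < p x) :
    ((2 / max 1 (Real.exp (-(Finset.univ.inf' Finset.univ_nonempty
          (fun x => Real.log (q x / p x)))))) - klDiv q p) * klDiv q p
      ≤ (∑ x, q x * (Real.log (q x / p x)) ^ 2) - (klDiv q p) ^ 2 ∧
    (∑ x, q x * (Real.log (q x / p x)) ^ 2) - (klDiv q p) ^ 2
      ≤ ((2 / min 1 (Real.exp (-(Finset.univ.sup' Finset.univ_nonempty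
          (fun x => Real.log (q x / p x)))))) - klDiv q p) * klDiv q p := by
  set ℓ : X → ℝ := fun x => log (q x / p x)
  have hD : klDiv q p = ∑ x, q x * (exp (-ℓ x) - 1 - -ℓ x) :=
    klDiv_eq_sum_mul_exp_sub_one_sub hq.2 hp.2 hqpos hppos
  have hlow : 2 / max 1 (exp (-univ.inf' univ_nonempty ℓ)) * klDiv q p ≤ ∑ x, q x * ℓ x ^ 2 := by
    rw [hD, mul_sum]
    refine sum_le_sum fun x _ => ?_
    rw [mul_left_comm, ← neg_sq (ℓ x)]
    exact mul_le_mul_of_nonneg_left (two_div_max_one_exp_mul_exp_sub_one_sub_le_sq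
      (neg_le_neg (inf'_le ℓ (mem_univ x)))) (hqpos x).le
  have hup : ∑ x, q x * ℓ x ^ 2 ≤ 2 / min 1 (exp (-univ.sup' univ_nonempty ℓ)) * klDiv q p := by
    rw [hD, mul_sum]
    refine sum_le_sum fun x _ => ?_
    rw [mul_left_comm, ← neg_sq (ℓ x)]
    exact mul_le_mul_of_nonneg_left (sq_le_two_div_min_one_exp_mul_exp_sub_one_sub
      (neg_le_neg (le_sup' ℓ (mem_univ x)))) (hqpos x).le
  constructor <;> nlinarith
end
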